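/- arXiv:1311.5121 — 2 statements merged into one kernel-verified Lean document; each statement's English description precedes it below -/
import Mathlib

section
/- Let p : ℝⁿ → [1,∞) be locally log-Hölder continuous with constant C and with p⁺ := sup p < ∞. Then for every m > 0 there exists c > 0 depending only on m, C and p⁺ such that for every cube Q ⊂ ℝⁿ with side length ℓ(Q) ≤ 1, every a ≥ 0, every x ∈ Q, and every f ∈ L¹(Q) satisfying a + ⨍_Q |f| dy ≤ max{1, |Q|^{−m}}, one has φ_a(x, ⨍_Q |f| dy) ≤ c ⨍_Q φ_a(y, |f(y)|) dy + c |Q|^m. -/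
open MeasureTheory Set

noncomputable section

/-- The axis-parallel cube in `ℝⁿ` with lower corner `z` and side length `ℓ`. -/
def cube (n : ℕ) (z : Fin n → ℝ) (ℓ : ℝ) : Set (Fin n → ℝ) :=
  Set.Icc z (fun i => z i + ℓ)

/-- `p` is locally log-Hölder continuous with constant `C`. -/
def LogHolder (n : ℕ) (C : ℝ) (p : (Fin n → ℝ) → ℝ) : Prop :=
  ∀ x y : Fin n → ℝ, x ≠ y →
    |p x - p y| ≤ C / Real.log (Real.exp 1 + 1 / ‖x - y‖)

/-- The shifted function `φ_a(x,t) = ∫₀ᵗ p(x) (a+τ)^(p(x)-2) τ dτ` associated to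
`φ(x,t) = t^(p x)`. -/
def phiShift (n : ℕ) (p : (Fin n → ℝ) → ℝ) (a : ℝ) (x : Fin n → ℝ) (t : ℝ) : ℝ :=
  ∫ τ in (0:ℝ)..t, p x * (a + τ) ^ (p x - 2) * τ

/-!
On a cube `Q` of side `ℓ ≤ 1` the log-Hölder condition bounds the oscillation of `p` by
`ε = C / log (e + 1/ℓ)`, and then `|Q| ^ (-m ε) ≤ exp (n m C)`. Freeze the exponent at
`q := max 1 (p x - ε)`, so that `q ≤ p` on `Q`. Since `a + ⨍|f| ≤ |Q| ^ (-m)`, on `[0, ⨍|f|]` the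
derivative of `φ_a(x, ·)` is at most `p⁺ |Q| ^ (-2 m ε)` times that of the shifted function of
`t ^ q`, which is convex, so Jensen's inequality moves the average outside. Finally the shifted
function of `t ^ q` is at most `p⁺ |Q| ^ (-2 m ε) φ_a(y, ·)` where `a + τ ≥ |Q| ^ m`, and the range
`a + τ < |Q| ^ m ≤ 1` contributes at most `p⁺ |Q| ^ m`.
-/

theorem MonotoneOn.integral_add_mul_sub_le_integral {g : ℝ → ℝ} {x₀ s t : ℝ}
    (hg : MonotoneOn g (Ici x₀)) (hs : x₀ ≤ s) (ht : x₀ ≤ t) :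
    (∫ τ in x₀..t, g τ) + g t * (s - t) ≤ ∫ τ in x₀..s, g τ := by
  have hint : ∀ {u v}, x₀ ≤ u → x₀ ≤ v → IntervalIntegrable g volume u v := fun hu hv ↦
    (hg.mono fun _ hτ ↦ le_trans (le_min hu hv) hτ.1).intervalIntegrable
  rw [← intervalIntegral.integral_add_adjacent_intervals (hint le_rfl ht) (hint ht hs)]
  gcongr
  rcases le_total t s with hts | hst
  · simpa [mul_comm] using intervalIntegral.integral_mono_on hts intervalIntegrable_const
      (hint ht hs) fun τ hτ ↦ hg ht (ht.trans hτ.1) hτ.1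
  · have := intervalIntegral.integral_mono_on hst (hint hs ht) intervalIntegrable_const
      fun τ hτ ↦ hg (hs.trans hτ.1) ht hτ.2
    rw [intervalIntegral.integral_symm]
    simp only [intervalIntegral.integral_const, smul_eq_mul] at this
    linarith

section Averages

variable {α : Type*} [MeasurableSpace α] {μ : Measure α}

theorem ofReal_integral_le_lintegral_ofReal {f : α → ℝ} (hf : Integrable f μ) :
    ENNReal.ofReal (∫ x, f x ∂μ) ≤ ∫⁻ x, ENNReal.ofReal (f x) ∂μ :=
  calc ENNReal.ofReal (∫ x, f x ∂μ) ≤ ENNReal.ofReal (∫ x, max (f x) 0 ∂μ) :=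
        ENNReal.ofReal_le_ofReal (integral_mono hf hf.pos_part fun x ↦ le_max_left _ _)
    _ = ∫⁻ x, ENNReal.ofReal (f x) ∂μ := by
        rw [ofReal_integral_eq_lintegral_ofReal hf.pos_part
          (ae_of_all _ fun x ↦ le_max_right _ _)]
        simp

variable [IsFiniteMeasure μ] [NeZero μ]

theorem ofReal_le_laverage_of_supporting_line {h : α → ℝ} (hh : Integrable h μ) {G : ℝ → ℝ}
    {k : ℝ} (hG : ∀ x, G (⨍ y, h y ∂μ) + k * (h x - ⨍ y, h y ∂μ) ≤ G (h x)) :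
    ENNReal.ofReal (G (⨍ y, h y ∂μ)) ≤ ⨍⁻ x, ENNReal.ofReal (G (h x)) ∂μ := by
  set t := ⨍ y, h y ∂μ
  have hlin : Integrable (fun x ↦ k * (h x - t)) μ := (hh.sub (integrable_const t)).const_mul k
  have hL : Integrable (fun x ↦ G t + k * (h x - t)) μ := (integrable_const _).add hlin
  have hint : ∫ x, G t + k * (h x - t) ∂μ = μ.real univ * G t := by
    rw [integral_add (integrable_const _) hlin,
      integral_const_mul, integral_sub_average, integral_const, smul_eq_mul, mul_zero, add_zero]
  rw [laverage_eq, ENNReal.le_div_iff_mul_le (Or.inl (NeZero.ne _)) (Or.inl (measure_ne_top _ _))]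
  calc ENNReal.ofReal (G t) * μ univ = ENNReal.ofReal (∫ x, G t + k * (h x - t) ∂μ) := by
        rw [hint, ENNReal.ofReal_mul measureReal_nonneg, ofReal_measureReal, mul_comm]
    _ ≤ ∫⁻ x, ENNReal.ofReal (G t + k * (h x - t)) ∂μ := ofReal_integral_le_lintegral_ofReal hL
    _ ≤ ∫⁻ x, ENNReal.ofReal (G (h x)) ∂μ :=
        lintegral_mono fun x ↦ ENNReal.ofReal_le_ofReal (hG x)

theorem laverage_ofReal_le_mul_add {g h : α → ℝ} {K B : ℝ} (hK : 0 ≤ K)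
    (hgh : ∀ᵐ x ∂μ, g x ≤ K * h x + B) :
    ⨍⁻ x, ENNReal.ofReal (g x) ∂μ ≤
      ENNReal.ofReal K * ⨍⁻ x, ENNReal.ofReal (h x) ∂μ + ENNReal.ofReal B := by
  calc ⨍⁻ x, ENNReal.ofReal (g x) ∂μ
      ≤ ⨍⁻ x, ENNReal.ofReal K * ENNReal.ofReal (h x) + ENNReal.ofReal B ∂μ := by
        refine laverage_mono_ae (hgh.mono fun x hx ↦ ?_)
        dsimp only
        rw [← ENNReal.ofReal_mul hK]
        exact (ENNReal.ofReal_le_ofReal hx).trans ENNReal.ofReal_add_le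
    _ = ENNReal.ofReal K * ⨍⁻ x, ENNReal.ofReal (h x) ∂μ + ENNReal.ofReal B := by
        rw [laverage_eq, laverage_eq, lintegral_add_right _ measurable_const,
          lintegral_const_mul' _ _ ENNReal.ofReal_ne_top, lintegral_const, ENNReal.add_div,
          mul_div_assoc, ENNReal.mul_div_cancel_right (NeZero.ne _) (measure_ne_top _ _)]

end Averages

section ShiftedPow

variable {a q r s t u b δ K τ : ℝ}

def shiftedPowDeriv (a r τ : ℝ) : ℝ := r * (a + τ) ^ (r - 2) * τ

def shiftedPow (a r t : ℝ) : ℝ := ∫ τ in (0:ℝ)..t, shiftedPowDeriv a r τ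

theorem phiShift_eq_shiftedPow (n : ℕ) (p : (Fin n → ℝ) → ℝ) (a : ℝ) (x : Fin n → ℝ) (t : ℝ) :
    phiShift n p a x t = shiftedPow a (p x) t := rfl

theorem shiftedPowDeriv_nonneg (ha : 0 ≤ a) (hr : 0 ≤ r) (hτ : 0 ≤ τ) :
    0 ≤ shiftedPowDeriv a r τ := by
  have := Real.rpow_nonneg (add_nonneg ha hτ) (r - 2)
  unfold shiftedPowDeriv
  positivity

theorem shiftedPowDeriv_eq_mul_rpow_mul_div (hτ : 0 < a + τ) :
    shiftedPowDeriv a r τ = r * (a + τ) ^ (r - 1) * (τ / (a + τ)) := by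
  rw [shiftedPowDeriv, show r - 1 = r - 2 + 1 by ring, Real.rpow_add_one hτ.ne']
  field_simp

theorem monotoneOn_shiftedPowDeriv (ha : 0 ≤ a) (hr : 1 ≤ r) :
    MonotoneOn (shiftedPowDeriv a r) (Ici 0) := by
  intro τ₁ (h₁ : 0 ≤ τ₁) τ₂ (h₂ : 0 ≤ τ₂) h
  rcases h₁.eq_or_lt with rfl | h₁
  · simpa [shiftedPowDeriv] using shiftedPowDeriv_nonneg ha (by linarith) h₂
  have k₁ : 0 < a + τ₁ := by linarith
  have k₂ : 0 < a + τ₂ := by linarith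
  rw [shiftedPowDeriv_eq_mul_rpow_mul_div k₁, shiftedPowDeriv_eq_mul_rpow_mul_div k₂]
  gcongr ?_ * ?_
  · gcongr
  · rw [div_le_div_iff₀ k₁ k₂]; nlinarith

theorem intervalIntegrable_shiftedPowDeriv (ha : 0 ≤ a) (hr : 1 ≤ r) (hs : 0 ≤ s) (ht : 0 ≤ t) :
    IntervalIntegrable (shiftedPowDeriv a r) volume s t :=
  ((monotoneOn_shiftedPowDeriv ha hr).mono fun _ hτ ↦
    le_trans (le_min hs ht) hτ.1).intervalIntegrable

theorem shiftedPow_nonneg (ha : 0 ≤ a) (hr : 0 ≤ r) (ht : 0 ≤ t) : 0 ≤ shiftedPow a r t :=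
  intervalIntegral.integral_nonneg ht fun _ hτ ↦ shiftedPowDeriv_nonneg ha hr hτ.1

theorem shiftedPow_add_integral (ha : 0 ≤ a) (hr : 1 ≤ r) (hs : 0 ≤ s) (ht : 0 ≤ t) :
    shiftedPow a r s + ∫ τ in s..t, shiftedPowDeriv a r τ = shiftedPow a r t :=
  intervalIntegral.integral_add_adjacent_intervals
    (intervalIntegrable_shiftedPowDeriv ha hr le_rfl hs)
    (intervalIntegrable_shiftedPowDeriv ha hr hs ht)

theorem shiftedPowDeriv_le_of_add_le_one (ha : 0 ≤ a) (hr : 1 ≤ r) (hτ : 0 < τ)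
    (h : a + τ ≤ 1) : shiftedPowDeriv a r τ ≤ r := by
  have hX : 0 < a + τ := by linarith
  rw [shiftedPowDeriv_eq_mul_rpow_mul_div hX]
  calc r * (a + τ) ^ (r - 1) * (τ / (a + τ)) ≤ r * 1 * 1 := by
        gcongr
        · exact Real.rpow_le_one hX.le h (by linarith)
        · exact div_le_one_of_le₀ (by linarith) hX.le
    _ = r := by ring

theorem shiftedPowDeriv_le_mul_rpow_sub (hq : 0 ≤ q) (hr : 1 ≤ r) (hτ : 0 ≤ τ)
    (hX : 0 < a + τ) :
    shiftedPowDeriv a q τ ≤ q * (a + τ) ^ (q - r) * shiftedPowDeriv a r τ := by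
  have hsplit : (a + τ) ^ (q - 2) = (a + τ) ^ (q - r) * (a + τ) ^ (r - 2) := by
    rw [← Real.rpow_add hX]; ring_nf
  have : 0 ≤ q * (a + τ) ^ (q - r) * ((a + τ) ^ (r - 2) * τ) := by positivity
  rw [shiftedPowDeriv, shiftedPowDeriv, hsplit]
  nlinarith

theorem integral_shiftedPowDeriv_le_mul (ha : 0 ≤ a) (hq : 1 ≤ q) (hr : 1 ≤ r) (hu : 0 ≤ u)
    (hus : u ≤ s) (hK : ∀ τ ∈ Ioo u s, (a + τ) ^ (q - r) ≤ K) :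
    ∫ τ in u..s, shiftedPowDeriv a q τ ≤ q * K * ∫ τ in u..s, shiftedPowDeriv a r τ := by
  rw [← intervalIntegral.integral_const_mul]
  refine intervalIntegral.integral_mono_on_of_le_Ioo hus
    (intervalIntegrable_shiftedPowDeriv ha hq hu (hu.trans hus))
    ((intervalIntegrable_shiftedPowDeriv ha hr hu (hu.trans hus)).const_mul _) fun τ hτ ↦ ?_
  have hτ0 : 0 ≤ τ := hu.trans hτ.1.le
  calc shiftedPowDeriv a q τ ≤ q * (a + τ) ^ (q - r) * shiftedPowDeriv a r τ :=
        shiftedPowDeriv_le_mul_rpow_sub (by linarith) hr hτ0 (by linarith [hτ.1])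
    _ ≤ q * K * shiftedPowDeriv a r τ :=
        mul_le_mul_of_nonneg_right (by gcongr; exact hK τ hτ)
          (shiftedPowDeriv_nonneg ha (by linarith) hτ0)

theorem shiftedPow_le_mul_rpow_sub_mul (ha : 0 ≤ a) (hq : 1 ≤ q) (hqr : q ≤ r) (ht : 0 ≤ t) :
    shiftedPow a r t ≤ r * (a + t) ^ (r - q) * shiftedPow a q t :=
  integral_shiftedPowDeriv_le_mul ha (hq.trans hqr) hq le_rfl ht fun _ hτ ↦
    Real.rpow_le_rpow (by linarith [hτ.1]) (by linarith [hτ.2]) (by linarith)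

theorem shiftedPow_le_mul_rpow_sub_mul_add (ha : 0 ≤ a) (hq : 1 ≤ q) (hqr : q ≤ r) (hb : 0 < b)
    (hb₁ : b ≤ 1) (hs : 0 ≤ s) :
    shiftedPow a q s ≤ q * b ^ (q - r) * shiftedPow a r s + q * b := by
  -- split `[0, s]` where `a + θ = b`: below, the integrand is at most `q`; above,
  -- `(a + τ) ^ (q - r) ≤ b ^ (q - r)`
  set θ := min s (max (b - a) 0)
  have hθ : 0 ≤ θ := le_min hs (le_max_right _ _)
  have hθs : θ ≤ s := min_le_left _ _
  have hθb : θ ≤ b := (min_le_right _ _).trans (max_le (by linarith) hb.le)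
  have hlow : shiftedPow a q θ ≤ q * b := by
    refine (intervalIntegral.integral_mono_on_of_le_Ioo hθ
      (intervalIntegrable_shiftedPowDeriv ha hq le_rfl hθ) intervalIntegrable_const
      fun τ hτ ↦ shiftedPowDeriv_le_of_add_le_one ha hq hτ.1 ?_).trans ?_
    · have : τ < b - a := by
        have := hτ.2.trans_le (min_le_right _ _)
        rw [lt_max_iff] at this
        exact this.resolve_right hτ.1.not_gt
      linarith
    · simp only [intervalIntegral.integral_const, sub_zero, smul_eq_mul]
      nlinarith
  have hhigh : ∫ τ in θ..s, shiftedPowDeriv a q τ ≤ q * b ^ (q - r) * shiftedPow a r s := by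
    refine (integral_shiftedPowDeriv_le_mul ha hq (hq.trans hqr) hθ hθs fun τ hτ ↦
      Real.rpow_le_rpow_of_nonpos hb ?_ (by linarith)).trans ?_
    · have := hτ.1
      rw [min_lt_iff, max_lt_iff] at this
      rcases this with h | h
      · linarith [hτ.2]
      · linarith [h.1]
    · have := shiftedPow_add_integral ha (hq.trans hqr) hθ hs
      have := shiftedPow_nonneg ha (by linarith) hθ (a := a) (r := r)
      gcongr
      linarith
  linarith [shiftedPow_add_integral ha hq hθ hs]

theorem shiftedPow_le_mul_rpow_neg_mul (ha : 0 ≤ a) (hq : 1 ≤ q) (hqr : q ≤ r)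
    (hrq : r - q ≤ δ) (hb : 0 < b) (hb₁ : b ≤ 1) (ht : 0 ≤ t) (htb : a + t ≤ b⁻¹) :
    shiftedPow a r t ≤ r * b ^ (-δ) * shiftedPow a q t := by
  refine (shiftedPow_le_mul_rpow_sub_mul ha hq hqr ht).trans
    (mul_le_mul_of_nonneg_right ?_ (shiftedPow_nonneg ha (by linarith) ht))
  refine mul_le_mul_of_nonneg_left ?_ (by linarith)
  calc (a + t) ^ (r - q) ≤ b⁻¹ ^ (r - q) := Real.rpow_le_rpow (by linarith) htb (by linarith)
    _ = b ^ (-(r - q)) := by rw [Real.inv_rpow hb.le, Real.rpow_neg hb.le]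
    _ ≤ b ^ (-δ) := Real.rpow_le_rpow_of_exponent_ge hb hb₁ (by linarith)

theorem shiftedPow_le_mul_rpow_neg_mul_add (ha : 0 ≤ a) (hq : 1 ≤ q) (hqr : q ≤ r)
    (hrq : r - q ≤ δ) (hb : 0 < b) (hb₁ : b ≤ 1) (hs : 0 ≤ s) :
    shiftedPow a q s ≤ q * b ^ (-δ) * shiftedPow a r s + q * b := by
  refine (shiftedPow_le_mul_rpow_sub_mul_add ha hq hqr hb hb₁ hs).trans ?_
  have := Real.rpow_le_rpow_of_exponent_ge hb hb₁ (show -δ ≤ q - r by linarith)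
  have := shiftedPow_nonneg ha (by linarith) hs (a := a) (r := r)
  gcongr

end ShiftedPow

section KeyEstimate

variable {α : Type*} [MeasurableSpace α] {μ : Measure α} [IsFiniteMeasure μ] [NeZero μ]

theorem ofReal_shiftedPow_average_le {p f : α → ℝ} {x : α} {a P ε b : ℝ}
    (hp : ∀ y, 1 ≤ p y) (hpx : p x ≤ P) (hε : 0 ≤ ε) (hosc : ∀ᵐ y ∂μ, |p x - p y| ≤ ε)
    (ha : 0 ≤ a) (hb : 0 < b) (hb₁ : b ≤ 1) (hf : Integrable f μ)
    (hsmall : a + ⨍ y, |f y| ∂μ ≤ b⁻¹) :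
    ENNReal.ofReal (shiftedPow a (p x) (⨍ y, |f y| ∂μ)) ≤
      ENNReal.ofReal ((P * b ^ (-(2 * ε))) ^ 2) *
          ⨍⁻ y, ENNReal.ofReal (shiftedPow a (p y) |f y|) ∂μ +
        ENNReal.ofReal ((P * b ^ (-(2 * ε))) ^ 2) * ENNReal.ofReal b := by
  have ht : 0 ≤ ⨍ y, |f y| ∂μ := by
    rw [average_eq, smul_eq_mul]
    exact mul_nonneg (by positivity) (integral_nonneg fun _ ↦ abs_nonneg _)
  set t := ⨍ y, |f y| ∂μ
  set q := max 1 (p x - ε)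
  set K := P * b ^ (-(2 * ε))
  have hq : 1 ≤ q := le_max_left _ _
  have hqx : q ≤ p x := max_le (hp x) (by linarith)
  have hqP : q ≤ P := hqx.trans hpx
  have hbε : 1 ≤ b ^ (-(2 * ε)) :=
    Real.one_le_rpow_of_pos_of_le_one_of_nonpos hb hb₁ (by linarith)
  have hK : 0 ≤ K := mul_nonneg (by linarith) (by linarith)
  have hfreeze : shiftedPow a (p x) t ≤ K * shiftedPow a q t := by
    have := shiftedPow_nonneg ha (by linarith) ht (a := a) (r := q)
    refine (shiftedPow_le_mul_rpow_neg_mul ha hq hqx (δ := 2 * ε)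
      (by linarith [le_max_right 1 (p x - ε)]) hb hb₁ ht hsmall).trans ?_
    gcongr
    exact mul_le_mul_of_nonneg_right hpx (by linarith)
  have hjensen : ENNReal.ofReal (shiftedPow a q t) ≤
      ⨍⁻ y, ENNReal.ofReal (shiftedPow a q |f y|) ∂μ :=
    ofReal_le_laverage_of_supporting_line hf.abs fun _ ↦
      (monotoneOn_shiftedPowDeriv ha hq).integral_add_mul_sub_le_integral (abs_nonneg _) ht
  have hunfreeze : ∀ᵐ y ∂μ, shiftedPow a q |f y| ≤ K * shiftedPow a (p y) |f y| + P * b := by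
    filter_upwards [hosc] with y hy
    rw [abs_le] at hy
    have := shiftedPow_nonneg ha (by linarith [hp y]) (abs_nonneg (f y)) (a := a)
    refine (shiftedPow_le_mul_rpow_neg_mul_add ha hq (max_le (hp y) (by linarith)) (δ := 2 * ε)
      (by linarith [le_max_right 1 (p x - ε)]) hb hb₁ (abs_nonneg _)).trans ?_
    gcongr
    exact mul_le_mul_of_nonneg_right hqP (by linarith)
  calc ENNReal.ofReal (shiftedPow a (p x) t)
      ≤ ENNReal.ofReal K * ENNReal.ofReal (shiftedPow a q t) := by
        rw [← ENNReal.ofReal_mul hK]; exact ENNReal.ofReal_le_ofReal hfreeze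
    _ ≤ ENNReal.ofReal K * (ENNReal.ofReal K *
          ⨍⁻ y, ENNReal.ofReal (shiftedPow a (p y) |f y|) ∂μ + ENNReal.ofReal (P * b)) := by
        gcongr; exact hjensen.trans (laverage_ofReal_le_mul_add hK hunfreeze)
    _ ≤ _ := by
        rw [mul_add, ← mul_assoc, ← ENNReal.ofReal_mul hK, ← ENNReal.ofReal_mul hK,
          ← ENNReal.ofReal_mul (sq_nonneg K), sq, mul_assoc K K]
        gcongr
        exact le_mul_of_one_le_right (by linarith) hbε

end KeyEstimate

section Cubes

variable {n : ℕ} {z x y : Fin n → ℝ} {ℓ C : ℝ} {p : (Fin n → ℝ) → ℝ}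

theorem volume_cube (n : ℕ) (z : Fin n → ℝ) (ℓ : ℝ) :
    volume (cube n z ℓ) = ENNReal.ofReal ℓ ^ n := by
  simp [cube, Real.volume_Icc_pi]

theorem norm_sub_le_of_mem_cube (hℓ : 0 ≤ ℓ) (hx : x ∈ cube n z ℓ) (hy : y ∈ cube n z ℓ) :
    ‖x - y‖ ≤ ℓ := by
  refine (pi_norm_le_iff_of_nonneg hℓ).2 fun i ↦ ?_
  rw [Pi.sub_apply, Real.norm_eq_abs, abs_le]
  constructor <;> linarith [hx.1 i, hx.2 i, hy.1 i, hy.2 i]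

theorem log_exp_one_add_pos {r : ℝ} (hr : 0 ≤ r) : 0 < Real.log (Real.exp 1 + r) :=
  Real.log_pos (by linarith [Real.add_one_le_exp (1 : ℝ)])

theorem rpow_div_log_exp_one_add_le_exp {r : ℝ} (hr : 0 < r) (hC : 0 ≤ C) :
    r ^ (C / Real.log (Real.exp 1 + r)) ≤ Real.exp C := by
  have hD := log_exp_one_add_pos hr.le
  rw [Real.rpow_def_of_pos hr, Real.exp_le_exp]
  calc Real.log r * (C / Real.log (Real.exp 1 + r))
      ≤ Real.log (Real.exp 1 + r) * (C / Real.log (Real.exp 1 + r)) := by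
        gcongr
        linarith [Real.exp_pos 1]
    _ = C := by field_simp

theorem pow_rpow_rpow_neg_le_exp (hℓ : 0 < ℓ) (hC : 0 ≤ C) {m : ℝ} (hm : 0 ≤ m) :
    ((ℓ ^ n) ^ m) ^ (-(2 * (C / Real.log (Real.exp 1 + 1 / ℓ)))) ≤ Real.exp (2 * n * m * C) :=
  calc ((ℓ ^ n) ^ m) ^ (-(2 * (C / Real.log (Real.exp 1 + 1 / ℓ))))
      = ((1 / ℓ) ^ (C / Real.log (Real.exp 1 + 1 / ℓ))) ^ (2 * n * m) := by
        rw [← Real.rpow_natCast, ← Real.rpow_mul hℓ.le, ← Real.rpow_mul hℓ.le, one_div,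
          Real.inv_rpow hℓ.le, ← Real.rpow_neg hℓ.le, ← Real.rpow_mul hℓ.le]
        ring_nf
    _ ≤ Real.exp C ^ (2 * n * m) := by
        gcongr
        exact rpow_div_log_exp_one_add_le_exp (by positivity) hC
    _ = Real.exp (2 * n * m * C) := by rw [← Real.exp_mul]; ring_nf

theorem LogHolder.mono {C' : ℝ} (hp : LogHolder n C p) (hC : C ≤ C') : LogHolder n C' p :=
  fun x y hxy ↦ (hp x y hxy).trans <|
    div_le_div_of_nonneg_right hC (log_exp_one_add_pos (by positivity)).le

theorem LogHolder.abs_sub_le (hp : LogHolder n C p) (hC : 0 ≤ C) (hℓ : 0 < ℓ)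
    (hxy : ‖x - y‖ ≤ ℓ) : |p x - p y| ≤ C / Real.log (Real.exp 1 + 1 / ℓ) := by
  rcases eq_or_ne x y with rfl | hne
  · simpa using div_nonneg hC (log_exp_one_add_pos (by positivity)).le
  have hxy₀ : 0 < ‖x - y‖ := norm_pos_iff.2 (sub_ne_zero.2 hne)
  refine (hp x y hne).trans (div_le_div_of_nonneg_left hC
    (log_exp_one_add_pos (by positivity)) (Real.log_le_log (by positivity) ?_))
  gcongr

theorem LogHolder.abs_sub_le_of_mem_cube (hp : LogHolder n C p) (hℓ : 0 < ℓ)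
    (hx : x ∈ cube n z ℓ) (hy : y ∈ cube n z ℓ) :
    |p x - p y| ≤ max C 0 / Real.log (Real.exp 1 + 1 / ℓ) :=
  (hp.mono (le_max_left C 0)).abs_sub_le (le_max_right C 0) hℓ
    (norm_sub_le_of_mem_cube hℓ.le hx hy)

end Cubes

theorem shifted_key_estimate (n : ℕ) (C pplus m : ℝ) (hm : 0 < m) :
    ∃ c : ℝ, 0 < c ∧
      ∀ p : (Fin n → ℝ) → ℝ, Measurable p →
        (∀ x, 1 ≤ p x) → (∀ x, p x ≤ pplus) → LogHolder n C p →
        ∀ (z : Fin n → ℝ) (ℓ : ℝ), 0 < ℓ → ℓ ≤ 1 →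
          ∀ a : ℝ, 0 ≤ a →
          ∀ f : (Fin n → ℝ) → ℝ, IntegrableOn f (cube n z ℓ) →
            a + (⨍ y in cube n z ℓ, |f y|) ≤
              max 1 ((volume (cube n z ℓ)).toReal ^ (-m)) →
            ∀ x ∈ cube n z ℓ,
              ENNReal.ofReal (phiShift n p a x (⨍ y in cube n z ℓ, |f y|)) ≤
                ENNReal.ofReal c *
                  ((∫⁻ y in cube n z ℓ, ENNReal.ofReal (phiShift n p a y |f y|)) /
                    volume (cube n z ℓ)) +
                ENNReal.ofReal c *
                  ENNReal.ofReal ((volume (cube n z ℓ)).toReal ^ m) := by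
  refine ⟨(max pplus 1 * Real.exp (2 * n * m * max C 0)) ^ 2, by positivity, ?_⟩
  intro p _ hp1 hpP hp z ℓ hℓ hℓ₁ a ha f hf hsmall x hx
  have hvol : volume (cube n z ℓ) = ENNReal.ofReal ℓ ^ n := volume_cube n z ℓ
  have : IsFiniteMeasure (volume.restrict (cube n z ℓ)) :=
    isFiniteMeasure_restrict.2 (by simp [hvol])
  have : NeZero (volume.restrict (cube n z ℓ)) := ⟨by simp [Measure.restrict_eq_zero, hvol, hℓ]⟩
  have hb : 0 < (ℓ ^ n) ^ m := by positivity
  have hb₁ : (ℓ ^ n) ^ m ≤ 1 := Real.rpow_le_one (by positivity) (pow_le_one₀ hℓ.le hℓ₁) hm.le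
  rw [show (volume (cube n z ℓ)).toReal = ℓ ^ n by simp [hvol, hℓ.le]] at hsmall ⊢
  rw [Real.rpow_neg (by positivity), max_eq_right (one_le_inv₀ hb |>.2 hb₁)] at hsmall
  have key := ofReal_shiftedPow_average_le (μ := volume.restrict (cube n z ℓ)) hp1
    (P := max pplus 1) (le_max_of_le_left (hpP x))
    (div_nonneg (le_max_right C 0) (log_exp_one_add_pos (by positivity)).le)
    ((ae_restrict_mem measurableSet_Icc).mono fun y hy ↦ hp.abs_sub_le_of_mem_cube hℓ hx hy)
    ha hb hb₁ hf hsmall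
  have hc : (max pplus 1 * ((ℓ ^ n) ^ m) ^ (-(2 * (max C 0 / Real.log (Real.exp 1 + 1 / ℓ))))) ^ 2 ≤
      (max pplus 1 * Real.exp (2 * n * m * max C 0)) ^ 2 := by
    gcongr
    exact pow_rpow_rpow_neg_le_exp hℓ (le_max_right C 0) hm.le
  simp only [phiShift_eq_shiftedPow, ← setLAverage_eq]
  exact key.trans (by gcongr ENNReal.ofReal ?_ * _ + ENNReal.ofReal ?_ * _)
end
end

section
/- Let ρ be an elliptic N-function. Then for every δ > 0 there exists C_δ ≥ 1, depending only on δ and the characteristics of ρ, such that for all a ∈ ℝ^d and all t ≥ 0 one has ρ_{|a|}(t) ≤ C_δ ρ(t) + δ ρ(|a|) and ρ(t) ≤ C_δ ρ_{|a|}(t) + δ ρ(|a|). -/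
/-!
The integrands `ρ'` and `ρ_b' (τ) = ρ'(b+τ) τ/(b+τ)` are nonnegative and nondecreasing, and the
upper ellipticity bound makes `ρ'` doubling, `ρ'(2s) ≤ 2^γ₂ ρ'(s)`; hence `ρ(t) ≈ t ρ'(t)` and
`ρ_b(t) ≈ t ρ_b'(t)`, with constants depending on `γ₂` only. Both `ρ(t)` and `ρ_b(t)` are at most
`t ρ'(b+t)`. If `t ≤ θ b` this is at most `θ · 2^γ₂ · b ρ'(b) ≲ θ ρ(b)`, which is `≤ δ ρ(b)` for
`θ` small. If `t > θ b` then `b + t ≤ (2/θ) t`, and `t ρ'(b+t)` is bounded by a constant multiple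
of both `t ρ'(t) ≈ ρ(t)` and `t ρ_b'(t) ≈ ρ_b(t)`.
-/

open MeasureTheory Set Filter

noncomputable section

/-- An elliptic N-function `ρ` with (given) first and second derivatives `ρ'`, `ρ''` on
`[0,∞)` resp. `(0,∞)`, and characteristics `γ₁ ≤ γ₂`:  `ρ` is continuous, strictly
increasing and convex on `[0,∞)` with `ρ(0) = 0`, `ρ(t)/t → 0` as `t → 0⁺`,
`t/ρ(t) → 0` as `t → ∞`, `ρ` is `C¹` on `[0,∞)` and `C²` on `(0,∞)`, and
`γ₁ ρ'(t) ≤ t ρ''(t) ≤ γ₂ ρ'(t)` for all `t > 0`. -/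
structure IsEllipticNFun (ρ ρ' ρ'' : ℝ → ℝ) (γ₁ γ₂ : ℝ) : Prop where
  continuousOn : ContinuousOn ρ (Set.Ici 0)
  strictMonoOn : StrictMonoOn ρ (Set.Ici 0)
  convexOn : ConvexOn ℝ (Set.Ici 0) ρ
  map_zero : ρ 0 = 0
  tendsto_zero : Filter.Tendsto (fun t => ρ t / t) (nhdsWithin 0 (Set.Ioi 0)) (nhds 0)
  tendsto_atTop : Filter.Tendsto (fun t => t / ρ t) Filter.atTop (nhds 0)
  hasDerivAt : ∀ t ∈ Set.Ici (0:ℝ), HasDerivWithinAt ρ (ρ' t) (Set.Ici 0) t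
  derivContinuousOn : ContinuousOn ρ' (Set.Ici 0)
  hasDeriv2At : ∀ t ∈ Set.Ioi (0:ℝ), HasDerivAt ρ' (ρ'' t) t
  deriv2ContinuousOn : ContinuousOn ρ'' (Set.Ioi 0)
  gamma_pos : 0 < γ₁
  gamma_le : γ₁ ≤ γ₂
  elliptic : ∀ t ∈ Set.Ioi (0:ℝ), γ₁ * ρ' t ≤ t * ρ'' t ∧ t * ρ'' t ≤ γ₂ * ρ' t

/-- The shift of a function with derivative `g`: `shift g a t = ∫₀ᵗ (g(a+τ)/(a+τ)) τ dτ`.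
For `g = ρ'` this is the shifted N-function `ρ_a`. -/
def shift (g : ℝ → ℝ) (a t : ℝ) : ℝ :=
  ∫ τ in (0:ℝ)..t, (g (a + τ) / (a + τ)) * τ

/-- The derivative of the shifted function: `(ρ_a)'(t) = (ρ'(a+t)/(a+t)) t` for `g = ρ'`. -/
def shiftD (g : ℝ → ℝ) (a t : ℝ) : ℝ :=
  (g (a + t) / (a + t)) * t

/-- The conjugate (Legendre transform) `f*(t) = sup_{s ≥ 0} (s t - f(s))`. -/
def conj (f : ℝ → ℝ) (t : ℝ) : ℝ :=
  sSup ((fun s => s * t - f s) '' Set.Ici 0)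

section MonotoneIntegral

variable {f : ℝ → ℝ} {t : ℝ}

lemma intervalIntegral_le_mul_of_monotoneOn (hf : MonotoneOn f (Icc 0 t)) (ht : 0 ≤ t) :
    ∫ x in (0:ℝ)..t, f x ≤ t * f t := by
  calc ∫ x in (0:ℝ)..t, f x ≤ ∫ _ in (0:ℝ)..t, f t :=
        intervalIntegral.integral_mono_on ht
          (MonotoneOn.intervalIntegrable (by rwa [uIcc_of_le ht])) intervalIntegrable_const
          fun x hx => hf hx ⟨ht, le_rfl⟩ hx.2
    _ = t * f t := by simp

lemma mul_le_intervalIntegral_of_monotoneOn {K : ℝ} (hf : MonotoneOn f (Icc 0 t))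
    (hf₀ : ∀ x ∈ Icc 0 t, 0 ≤ f x) (hK : f t ≤ K * f (t / 2)) (hK₀ : 0 ≤ K) (ht : 0 ≤ t) :
    t * f t ≤ 2 * K * ∫ x in (0:ℝ)..t, f x := by
  have hint : IntervalIntegrable f volume 0 t :=
    MonotoneOn.intervalIntegrable (by rwa [uIcc_of_le ht])
  have hmid : t / 2 ∈ uIcc 0 t := by rw [uIcc_of_le ht]; constructor <;> linarith
  have hsub : uIcc (t / 2) t ⊆ uIcc 0 t := uIcc_subset_uIcc hmid right_mem_uIcc
  have hlow : t / 2 * f (t / 2) ≤ ∫ x in (0:ℝ)..t, f x := by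
    rw [← intervalIntegral.integral_add_adjacent_intervals
      (hint.mono_set (uIcc_subset_uIcc left_mem_uIcc hmid)) (hint.mono_set hsub)]
    have hleft : 0 ≤ ∫ x in (0:ℝ)..t / 2, f x :=
      intervalIntegral.integral_nonneg (by linarith) fun x hx => hf₀ x ⟨hx.1, by linarith [hx.2]⟩
    have hright : ∫ _ in (t / 2)..t, f (t / 2) ≤ ∫ x in (t / 2)..t, f x :=
      intervalIntegral.integral_mono_on (by linarith) intervalIntegrable_const (hint.mono_set hsub)
        fun x hx => hf ⟨by linarith, by linarith⟩ ⟨by linarith [hx.1], hx.2⟩ hx.1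
    simp only [intervalIntegral.integral_const, smul_eq_mul] at hright
    linarith
  calc t * f t ≤ t * (K * f (t / 2)) := mul_le_mul_of_nonneg_left hK ht
    _ = 2 * K * (t / 2 * f (t / 2)) := by ring
    _ ≤ 2 * K * ∫ x in (0:ℝ)..t, f x := mul_le_mul_of_nonneg_left hlow (by positivity)

end MonotoneIntegral

namespace IsEllipticNFun

variable {ρ ρ' ρ'' : ℝ → ℝ} {γ₁ γ₂ : ℝ} (hρ : IsEllipticNFun ρ ρ' ρ'' γ₁ γ₂)
include hρ

lemma nonneg {t : ℝ} (ht : 0 ≤ t) : 0 ≤ ρ t :=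
  hρ.map_zero ▸ hρ.strictMonoOn.monotoneOn self_mem_Ici ht ht

lemma deriv_nonneg {t : ℝ} (ht : 0 ≤ t) : 0 ≤ ρ' t := by
  refine (hρ.hasDerivAt t ht).nonneg_of_monotoneOn ?_ hρ.strictMonoOn.monotoneOn
  rw [accPt_principal_iff_nhdsWithin]
  exact (nhdsGT_neBot t).mono
    (nhdsWithin_mono _ fun s hs => ⟨ht.trans hs.le, ne_of_gt hs⟩)

lemma monotoneOn_deriv : MonotoneOn ρ' (Ici 0) := by
  refine monotoneOn_of_deriv_nonneg (convex_Ici 0) hρ.derivContinuousOn ?_ ?_ <;>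
    rw [interior_Ici] <;> intro x hx
  · exact (hρ.hasDeriv2At x hx).differentiableAt.differentiableWithinAt
  · rw [(hρ.hasDeriv2At x hx).deriv]
    have := (hρ.elliptic x hx).1
    have := mul_nonneg hρ.gamma_pos.le (hρ.deriv_nonneg (le_of_lt hx))
    exact nonneg_of_mul_nonneg_right (by linarith) hx

lemma integral_deriv {t : ℝ} (ht : 0 ≤ t) : ∫ τ in (0:ℝ)..t, ρ' τ = ρ t := by
  rw [intervalIntegral.integral_eq_sub_of_hasDeriv_right_of_le ht
    (hρ.continuousOn.mono Icc_subset_Ici_self)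
    (fun x hx => (hρ.hasDerivAt x hx.1.le).mono (Ioi_subset_Ici hx.1.le))
    ((hρ.derivContinuousOn.mono (by simp [uIcc_of_le ht, Icc_subset_Ici_self])).intervalIntegrable),
    hρ.map_zero, sub_zero]

lemma deriv_le_rpow_mul {s u c : ℝ} (hs : 0 < s) (hsu : s ≤ u) (huc : u ≤ c * s) :
    ρ' u ≤ c ^ γ₂ * ρ' s := by
  have hu : 0 < u := hs.trans_le hsu
  have hanti : AntitoneOn (fun x => ρ' x * x ^ (-γ₂)) (Ioi 0) := by
    refine antitoneOn_of_hasDerivWithinAt_nonpos (convex_Ioi 0)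
      (f' := fun x => ρ'' x * x ^ (-γ₂) + ρ' x * (-γ₂ * x ^ (-γ₂ - 1)))
      (hρ.derivContinuousOn.mono Ioi_subset_Ici_self |>.mul
        (continuousOn_id.rpow_const fun x hx => Or.inl (ne_of_gt hx)))
      (fun x hx => ?_) (fun x hx => ?_) <;> rw [interior_Ioi] at hx
    · exact ((hρ.hasDeriv2At x hx).mul (Real.hasDerivAt_rpow_const (Or.inl (ne_of_gt hx))))
        |>.hasDerivWithinAt
    · have hx' : x ^ (-γ₂) = x * x ^ (-γ₂ - 1) := by
        rw [Real.rpow_sub_one (ne_of_gt hx), mul_div_cancel₀ _ (ne_of_gt hx)]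
      rw [hx']
      nlinarith [(hρ.elliptic x hx).2, Real.rpow_nonneg (le_of_lt hx) (-γ₂ - 1)]
  have hmono := hanti hs hu hsu
  simp only at hmono
  calc ρ' u = ρ' u * u ^ (-γ₂) * u ^ γ₂ := by
        rw [mul_assoc, ← Real.rpow_add hu]; simp
    _ ≤ ρ' s * s ^ (-γ₂) * u ^ γ₂ := by gcongr
    _ = (u / s) ^ γ₂ * ρ' s := by
        rw [Real.div_rpow hu.le hs.le, Real.rpow_neg hs.le]; field_simp
    _ ≤ c ^ γ₂ * ρ' s := by
        gcongr
        · exact hρ.deriv_nonneg hs.le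
        · exact hρ.gamma_pos.le.trans hρ.gamma_le
        · rwa [div_le_iff₀ hs]

lemma le_mul_deriv {t : ℝ} (ht : 0 ≤ t) : ρ t ≤ t * ρ' t :=
  hρ.integral_deriv ht ▸
    intervalIntegral_le_mul_of_monotoneOn (hρ.monotoneOn_deriv.mono Icc_subset_Ici_self) ht

lemma mul_deriv_le {t : ℝ} (ht : 0 < t) : t * ρ' t ≤ 2 * 2 ^ γ₂ * ρ t :=
  hρ.integral_deriv ht.le ▸
    mul_le_intervalIntegral_of_monotoneOn (hρ.monotoneOn_deriv.mono Icc_subset_Ici_self)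
      (fun x hx => hρ.deriv_nonneg hx.1)
      (hρ.deriv_le_rpow_mul (half_pos ht) (by linarith) (by linarith)) (by positivity) ht.le

variable {b t : ℝ}

lemma shiftD_nonneg (hb : 0 ≤ b) (ht : 0 ≤ t) : 0 ≤ shiftD ρ' b t :=
  mul_nonneg (div_nonneg (hρ.deriv_nonneg (add_nonneg hb ht)) (add_nonneg hb ht)) ht

lemma shift_nonneg (hb : 0 ≤ b) (ht : 0 ≤ t) : 0 ≤ shift ρ' b t :=
  intervalIntegral.integral_nonneg ht fun _ hx => hρ.shiftD_nonneg hb hx.1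

lemma shiftD_le_deriv (hb : 0 ≤ b) (ht : 0 ≤ t) : shiftD ρ' b t ≤ ρ' (b + t) := by
  rw [shiftD, div_mul_eq_mul_div, mul_div_assoc]
  exact mul_le_of_le_one_right (hρ.deriv_nonneg (add_nonneg hb ht))
    (div_le_one_of_le₀ (le_add_of_nonneg_left hb) (add_nonneg hb ht))

lemma monotoneOn_shiftD (hb : 0 ≤ b) : MonotoneOn (shiftD ρ' b) (Ici 0) := by
  intro x (hx : 0 ≤ x) y (hy : 0 ≤ y) hxy
  have hfrac : x / (b + x) ≤ y / (b + y) := by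
    rcases eq_or_lt_of_le hx with rfl | hx
    · simpa using div_nonneg hy (add_nonneg hb hy)
    · rw [div_le_div_iff₀ (by linarith) (by linarith)]
      nlinarith
  simp only [shiftD, div_mul_eq_mul_div, mul_div_assoc]
  exact mul_le_mul (hρ.monotoneOn_deriv (add_nonneg hb hx) (add_nonneg hb hy) (by linarith)) hfrac
    (div_nonneg hx (add_nonneg hb hx)) (hρ.deriv_nonneg (add_nonneg hb hy))

lemma shiftD_le_mul_shiftD_half (hb : 0 ≤ b) (ht : 0 < t) :
    shiftD ρ' b t ≤ 2 * 2 ^ γ₂ * shiftD ρ' b (t / 2) := by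
  have hd : ρ' (b + t) ≤ 2 ^ γ₂ * ρ' (b + t / 2) :=
    hρ.deriv_le_rpow_mul (by positivity) (by linarith) (by linarith)
  have hfrac : t / (b + t) ≤ 2 * (t / 2 / (b + t / 2)) := by
    rw [mul_div_assoc', mul_div_cancel₀ _ two_ne_zero]
    exact div_le_div_of_nonneg_left ht.le (by positivity) (by linarith)
  simp only [shiftD, div_mul_eq_mul_div, mul_div_assoc]
  calc ρ' (b + t) * (t / (b + t)) ≤ 2 ^ γ₂ * ρ' (b + t / 2) * (2 * (t / 2 / (b + t / 2))) :=
        mul_le_mul hd hfrac (by positivity)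
          (mul_nonneg (by positivity) (hρ.deriv_nonneg (by positivity)))
    _ = 2 * 2 ^ γ₂ * (ρ' (b + t / 2) * (t / 2 / (b + t / 2))) := by ring

lemma shift_le_mul_shiftD (hb : 0 ≤ b) (ht : 0 ≤ t) : shift ρ' b t ≤ t * shiftD ρ' b t :=
  intervalIntegral_le_mul_of_monotoneOn ((hρ.monotoneOn_shiftD hb).mono Icc_subset_Ici_self) ht

lemma mul_shiftD_le_shift (hb : 0 ≤ b) (ht : 0 < t) :
    t * shiftD ρ' b t ≤ 2 * (2 * 2 ^ γ₂) * shift ρ' b t :=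
  mul_le_intervalIntegral_of_monotoneOn ((hρ.monotoneOn_shiftD hb).mono Icc_subset_Ici_self)
    (fun x hx => hρ.shiftD_nonneg hb hx.1) (hρ.shiftD_le_mul_shiftD_half hb ht) (by positivity)
    ht.le

lemma shift_le_mul_deriv_add (hb : 0 ≤ b) (ht : 0 ≤ t) : shift ρ' b t ≤ t * ρ' (b + t) :=
  (hρ.shift_le_mul_shiftD hb ht).trans (mul_le_mul_of_nonneg_left (hρ.shiftD_le_deriv hb ht) ht)

lemma le_mul_deriv_add (hb : 0 ≤ b) (ht : 0 ≤ t) : ρ t ≤ t * ρ' (b + t) :=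
  (hρ.le_mul_deriv ht).trans <| mul_le_mul_of_nonneg_left
    (hρ.monotoneOn_deriv ht (add_nonneg hb ht) (le_add_of_nonneg_left hb)) ht

lemma mul_deriv_add_le_of_le_mul {θ : ℝ} (hb : 0 < b) (ht : 0 ≤ t) (hθ₀ : 0 ≤ θ) (hθ₁ : θ ≤ 1)
    (htb : t ≤ θ * b) : t * ρ' (b + t) ≤ θ * (2 * 2 ^ γ₂ * 2 ^ γ₂) * ρ b := by
  have hd : ρ' (b + t) ≤ 2 ^ γ₂ * ρ' b :=
    hρ.deriv_le_rpow_mul hb (le_add_of_nonneg_right ht) (by nlinarith)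
  calc t * ρ' (b + t) ≤ θ * b * (2 ^ γ₂ * ρ' b) :=
        mul_le_mul htb hd (hρ.deriv_nonneg (by linarith)) (by positivity)
    _ = θ * 2 ^ γ₂ * (b * ρ' b) := by ring
    _ ≤ θ * 2 ^ γ₂ * (2 * 2 ^ γ₂ * ρ b) :=
        mul_le_mul_of_nonneg_left (hρ.mul_deriv_le hb) (by positivity)
    _ = θ * (2 * 2 ^ γ₂ * 2 ^ γ₂) * ρ b := by ring

lemma mul_deriv_add_le_of_add_le {c : ℝ} (hb : 0 ≤ b) (ht : 0 < t) (hc : b + t ≤ c * t) :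
    t * ρ' (b + t) ≤ c ^ γ₂ * (2 * 2 ^ γ₂) * ρ t := by
  have hd : ρ' (b + t) ≤ c ^ γ₂ * ρ' t :=
    hρ.deriv_le_rpow_mul ht (le_add_of_nonneg_left hb) hc
  calc t * ρ' (b + t) ≤ t * (c ^ γ₂ * ρ' t) := mul_le_mul_of_nonneg_left hd ht.le
    _ = c ^ γ₂ * (t * ρ' t) := by ring
    _ ≤ c ^ γ₂ * (2 * 2 ^ γ₂ * ρ t) :=
        mul_le_mul_of_nonneg_left (hρ.mul_deriv_le ht)
          (Real.rpow_nonneg (nonneg_of_mul_nonneg_left (by linarith) ht) _)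
    _ = c ^ γ₂ * (2 * 2 ^ γ₂) * ρ t := by ring

lemma mul_deriv_add_le_shift_of_add_le {c : ℝ} (hb : 0 ≤ b) (ht : 0 < t) (hc : b + t ≤ c * t) :
    t * ρ' (b + t) ≤ c * (2 * (2 * 2 ^ γ₂)) * shift ρ' b t := by
  have hbt : 0 < b + t := by linarith
  have hc₀ : 0 ≤ c := nonneg_of_mul_nonneg_left (by linarith) ht
  calc t * ρ' (b + t) ≤ c * t / (b + t) * (t * ρ' (b + t)) :=
        le_mul_of_one_le_left (mul_nonneg ht.le (hρ.deriv_nonneg hbt.le)) ((one_le_div hbt).2 hc)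
    _ = c * (t * shiftD ρ' b t) := by rw [shiftD]; ring
    _ ≤ c * (2 * (2 * 2 ^ γ₂) * shift ρ' b t) :=
        mul_le_mul_of_nonneg_left (hρ.mul_shiftD_le_shift hb ht) hc₀
    _ = c * (2 * (2 * 2 ^ γ₂)) * shift ρ' b t := by ring

end IsEllipticNFun

theorem removal_of_shift_general (γ₁ γ₂ δ : ℝ) (hδ : 0 < δ) :
    ∃ C : ℝ, 1 ≤ C ∧
      ∀ ρ ρ' ρ'' : ℝ → ℝ, IsEllipticNFun ρ ρ' ρ'' γ₁ γ₂ →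
        ∀ (d : ℕ) (a : EuclideanSpace ℝ (Fin d)) (t : ℝ), 0 ≤ t →
          shift ρ' ‖a‖ t ≤ C * ρ t + δ * ρ ‖a‖ ∧
          ρ t ≤ C * shift ρ' ‖a‖ t + δ * ρ ‖a‖ := by
  obtain ⟨θ, hθ₀, hθ₁, hθδ⟩ : ∃ θ : ℝ, 0 < θ ∧ θ ≤ 1 ∧ θ * (2 * 2 ^ γ₂ * 2 ^ γ₂) ≤ δ :=
    ⟨min 1 (δ / _), lt_min one_pos (by positivity), min_le_left _ _,
      (le_div_iff₀ (by positivity)).1 (min_le_right _ _)⟩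
  obtain ⟨C, hC, hCρ, hCshift⟩ : ∃ C : ℝ, 1 ≤ C ∧ (2 / θ) ^ γ₂ * (2 * 2 ^ γ₂) ≤ C ∧
      2 / θ * (2 * (2 * 2 ^ γ₂)) ≤ C :=
    ⟨max 1 (max _ _), le_max_left _ _, (le_max_left _ _).trans (le_max_right _ _),
      (le_max_right _ _).trans (le_max_right _ _)⟩
  refine ⟨C, hC, fun ρ ρ' ρ'' hρ _ a t ht => ?_⟩
  set b := ‖a‖
  have hb : 0 ≤ b := norm_nonneg a
  have hδρ := mul_nonneg hδ.le (hρ.nonneg hb)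
  rcases ht.eq_or_lt with rfl | ht
  · simpa [shift, hρ.map_zero] using hδρ
  have hρt := hρ.nonneg ht.le
  have hshift := hρ.shift_nonneg hb ht.le
  have hshift_le := hρ.shift_le_mul_deriv_add hb ht.le
  have hρ_le := hρ.le_mul_deriv_add hb ht.le
  rcases le_or_gt t (θ * b) with hsmall | hlarge
  · have hX := hρ.mul_deriv_add_le_of_le_mul (pos_of_mul_pos_right (ht.trans_le hsmall) hθ₀.le)
      ht.le hθ₀.le hθ₁ hsmall
    have hθρ := mul_le_mul_of_nonneg_right hθδ (hρ.nonneg hb)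
    have hCρt := mul_nonneg (zero_le_one.trans hC) hρt
    have hCshift₀ := mul_nonneg (zero_le_one.trans hC) hshift
    constructor <;> linarith
  · have hc : b + t ≤ 2 / θ * t := by
      rw [div_mul_eq_mul_div, le_div_iff₀ hθ₀]
      nlinarith
    have hXρ := (hρ.mul_deriv_add_le_of_add_le hb ht hc).trans
      (mul_le_mul_of_nonneg_right hCρ hρt)
    have hXshift := (hρ.mul_deriv_add_le_shift_of_add_le hb ht hc).trans
      (mul_le_mul_of_nonneg_right hCshift hshift)
    constructor <;> linarith

/-- Removal of shift: for an elliptic N-function `ρ` and every `δ > 0` there is `C_δ ≥ 1`,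
depending only on `δ` and the characteristics of `ρ`, such that for all `a ∈ ℝ^d` and
`t ≥ 0` one has `ρ_{|a|}(t) ≤ C_δ ρ(t) + δ ρ(|a|)` and `ρ(t) ≤ C_δ ρ_{|a|}(t) + δ ρ(|a|)`. -/
theorem removal_of_shift (γ₁ γ₂ δ : ℝ) (hγ₁ : 0 < γ₁) (hγ : γ₁ ≤ γ₂) (hδ : 0 < δ) :
    ∃ C : ℝ, 1 ≤ C ∧
      ∀ ρ ρ' ρ'' : ℝ → ℝ, IsEllipticNFun ρ ρ' ρ'' γ₁ γ₂ →
        ∀ (d : ℕ) (a : EuclideanSpace ℝ (Fin d)) (t : ℝ), 0 ≤ t →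
          shift ρ' ‖a‖ t ≤ C * ρ t + δ * ρ ‖a‖ ∧
          ρ t ≤ C * shift ρ' ‖a‖ t + δ * ρ ‖a‖ :=
  removal_of_shift_general γ₁ γ₂ δ hδ
end
end
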